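/- arXiv:2202.07902 — 2 statements merged into one kernel-verified Lean document; each statement's English description precedes it below -/
import Mathlib

section
/- For all real x and y ∈ {0,1}, letting ψ(x) = min(max(x,-1),1) be the clamp of x to [-1,1], and letting 𝟙_S(x,y) be the indicator of the set S = {(x,y) : (x < -1 and y = 1) or (x > 1 and y = 0)}, we have (1/(1+e^x) - y)^2 ≥ 1/4 - (1-2y)ψ(x)/4 + ψ(x)^2/16 - |ψ(x)|^3/48 - |ψ(x)|^4/96 - 𝟙_S(x,y)/(1+e)^2. -/
open scoped Classical

noncomputable def clamp (x : ℝ) : ℝ := min (max x (-1)) 1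

/-
The bound is a statement about `σ t = 1 / (1 + exp t)` (the prediction error for the label 0):
the label 1 reduces to it through `1 - σ x = σ (-x)` and `clamp (-x) = - clamp x`. On `[-1, 1]`
the right-hand side is a Taylor-type bound, coming from `σ t ≥ 1/2 - t/4` for `0 ≤ t ≤ 1` and
`σ (-u) ≥ 1/2 + u/4 - u³/48` for `0 ≤ u ≤ 1`, both consequences of quartic Taylor bounds on `exp`.
Outside `[-1, 1]` the clamp freezes the bound at its value at `±1`: for `x < -1` monotonicity of `σ`
transports the bound at `-1`, and for `x > 1` the bound at `1` is at most `σ 1 ^ 2 = 1 / (1 + e)²`,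
so subtracting the indicator term makes the right-hand side nonpositive.
-/

open Real

section Clamp

lemma clamp_of_abs_le_one {x : ℝ} (hx : |x| ≤ 1) : clamp x = x := by
  rw [abs_le] at hx
  rw [clamp, max_eq_left hx.1, min_eq_left hx.2]

lemma clamp_of_one_le {x : ℝ} (hx : 1 ≤ x) : clamp x = 1 := by
  rw [clamp, max_eq_left (by linarith), min_eq_right hx]

lemma clamp_of_le_neg_one {x : ℝ} (hx : x ≤ -1) : clamp x = -1 := by
  rw [clamp, max_eq_right hx, min_eq_left (by norm_num)]

lemma clamp_neg (x : ℝ) : clamp (-x) = -clamp x := by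
  simp only [clamp, min_def, max_def]
  split_ifs <;> linarith

end Clamp

lemma Real.exp_le_quartic_of_le_one {x : ℝ} (h0 : 0 ≤ x) (h1 : x ≤ 1) :
    exp x ≤ 1 + x + x ^ 2 / 2 + x ^ 3 / 6 + 5 * x ^ 4 / 96 := by
  have h := exp_bound' h0 h1 (n := 4) (by norm_num)
  norm_num [Finset.sum_range_succ, Nat.factorial] at h
  linarith

lemma Real.quartic_le_exp {x : ℝ} (h0 : 0 ≤ x) :
    1 + x + x ^ 2 / 2 + x ^ 3 / 6 + x ^ 4 / 24 ≤ exp x := by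
  have h := sum_le_exp_of_nonneg h0 5
  norm_num [Finset.sum_range_succ, Nat.factorial] at h
  linarith

lemma one_div_one_add_exp_antitone : Antitone fun x : ℝ => 1 / (1 + exp x) :=
  fun _ _ hxy => one_div_le_one_div_of_le (by positivity) (by gcongr)

lemma one_sub_one_div_one_add_exp (x : ℝ) :
    1 - 1 / (1 + exp x) = 1 / (1 + exp (-x)) := by
  rw [exp_neg]
  field_simp
  ring

lemma half_sub_le_one_div_one_add_exp {t : ℝ} (h0 : 0 ≤ t) (h1 : t ≤ 1) :
    1 / 2 - t / 4 ≤ 1 / (1 + exp t) := by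
  have hexp := exp_le_quartic_of_le_one h0 h1
  rw [le_div_iff₀ (by positivity)]
  nlinarith [mul_le_mul_of_nonneg_left hexp (show (0 : ℝ) ≤ 1 / 2 - t / 4 by linarith),
    pow_nonneg h0 3, pow_nonneg h0 4, pow_nonneg h0 5]

lemma half_add_le_one_div_one_add_exp_neg {u : ℝ} (h0 : 0 ≤ u) (h1 : u ≤ 1) :
    1 / 2 + u / 4 - u ^ 3 / 48 ≤ 1 / (1 + exp (-u)) := by
  have hu3 : u ^ 3 ≤ 1 := pow_le_one₀ h0 h1
  have hexp := quartic_le_exp h0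
  have key : 24 + 12 * u - u ^ 3 ≤ exp u * (24 - 12 * u + u ^ 3) := by
    nlinarith [mul_le_mul_of_nonneg_right hexp (show (0 : ℝ) ≤ 24 - 12 * u + u ^ 3 by nlinarith),
      pow_nonneg h0 6, pow_nonneg h0 7]
  rw [← one_sub_one_div_one_add_exp, le_sub_iff_add_le, ← le_sub_iff_add_le',
    div_le_iff₀ (by positivity)]
  nlinarith

/-- The right-hand side of the bound for the label `0`, as a function of `t = clamp x`. -/
noncomputable def sqErrLowerBound (t : ℝ) : ℝ :=
  1 / 4 - t / 4 + t ^ 2 / 16 - |t| ^ 3 / 48 - |t| ^ 4 / 96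

lemma sqErrLowerBound_le_of_abs_le_one {t : ℝ} (ht : |t| ≤ 1) :
    sqErrLowerBound t ≤ (1 / (1 + exp t)) ^ 2 := by
  rw [abs_le] at ht
  rcases le_total 0 t with h0 | h0
  · have hσ := half_sub_le_one_div_one_add_exp h0 ht.2
    have hsq : (1 / 2 - t / 4) ^ 2 ≤ (1 / (1 + exp t)) ^ 2 := by gcongr; linarith
    rw [sqErrLowerBound, abs_of_nonneg h0]
    nlinarith [pow_nonneg h0 3, pow_nonneg h0 4]
  · obtain ⟨u, rfl⟩ : ∃ u, t = -u := ⟨-t, by ring⟩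
    have hu : 0 ≤ u := by linarith
    have hσ := half_add_le_one_div_one_add_exp_neg hu (by linarith)
    have hsq : (1 / 2 + u / 4 - u ^ 3 / 48) ^ 2 ≤ (1 / (1 + exp (-u))) ^ 2 := by
      gcongr
      nlinarith [pow_le_one₀ hu (show u ≤ 1 by linarith) (n := 3)]
    rw [sqErrLowerBound, abs_neg, abs_of_nonneg hu]
    nlinarith [pow_nonneg hu 6]

lemma sqErrLowerBound_clamp_sub_le (x : ℝ) :
    sqErrLowerBound (clamp x) - (if 1 < x then (1 : ℝ) else 0) / (1 + exp 1) ^ 2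
      ≤ (1 / (1 + exp x)) ^ 2 := by
  rcases lt_or_ge 1 x with hx | hx
  · have h1 := sqErrLowerBound_le_of_abs_le_one (t := 1) (by norm_num)
    rw [div_pow, one_pow] at h1
    rw [clamp_of_one_le hx.le, if_pos hx]
    linarith [sq_nonneg (1 / (1 + exp x))]
  rw [if_neg (not_lt.2 hx), zero_div, sub_zero]
  rcases lt_or_ge x (-1) with hx' | hx'
  · have h1 := sqErrLowerBound_le_of_abs_le_one (t := -1) (by norm_num)
    have hσ : 1 / (1 + exp (-1)) ≤ 1 / (1 + exp x) := one_div_one_add_exp_antitone hx'.le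
    rw [clamp_of_le_neg_one hx'.le]
    exact h1.trans (by gcongr)
  · rw [clamp_of_abs_le_one (abs_le.2 ⟨hx', hx⟩)]
    exact sqErrLowerBound_le_of_abs_le_one (abs_le.2 ⟨hx', hx⟩)

theorem sigmoid_sq_error_lower_bound (x y : ℝ) (hy : y = 0 ∨ y = 1) :
    (1 / (1 + Real.exp x) - y) ^ 2 ≥
      1 / 4 - (1 - 2 * y) * clamp x / 4 + (clamp x) ^ 2 / 16
        - |clamp x| ^ 3 / 48 - |clamp x| ^ 4 / 96
        - (if (x < -1 ∧ y = 1) ∨ (1 < x ∧ y = 0) then (1 : ℝ) else 0)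
            / (1 + Real.exp 1) ^ 2 := by
  rcases hy with rfl | rfl
  · have h := sqErrLowerBound_clamp_sub_le x
    simp only [zero_ne_one, and_false, false_or, and_true]
    rw [sqErrLowerBound] at h
    linarith
  · have h := sqErrLowerBound_clamp_sub_le (-x)
    have hσ : (1 / (1 + exp x) - 1) ^ 2 = (1 / (1 + exp (-x))) ^ 2 := by
      rw [← one_sub_one_div_one_add_exp]; ring
    have hind : ((x < -1 ∧ (1 : ℝ) = 1) ∨ (1 < x ∧ (1 : ℝ) = 0)) ↔ 1 < -x := by
      constructor <;> intro <;> norm_num at * <;> linarith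
    rw [if_congr hind rfl rfl, hσ]
    rw [sqErrLowerBound, clamp_neg, abs_neg] at h
    linarith
end

section
/- With A, D, P, Ã as above and Y ∈ {0,1}^{n×K} a label indicator matrix with R = YᵀY diagonal and invertible, define Π^k = R⁻¹Yᵀ P^k Y and Π̃^k = R^{-1/2}Yᵀ Ã^k Y R^{-1/2}. Then for all classes l, m: R_{ll}Π^k_{lm} + R_{mm}Π^k_{ml} ≥ 2√(R_{ll}R_{mm}) Π̃^k_{lm}; in particular, taking l = m, π_l^k ≥ π̃_l^k (the diagonal entries satisfy Π^k_{ll} ≥ Π̃^k_{ll}). -/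
/-!
With `S = diag(√d)` one has `S P = Ã S`, hence `S Pᵏ = Ãᵏ S`, i.e.
`(Pᵏ)ᵢⱼ = (Ãᵏ)ᵢⱼ √dⱼ / √dᵢ`. As `Ãᵏ` is symmetric and nonnegative,
`(Pᵏ)ᵢⱼ + (Pᵏ)ⱼᵢ = (Ãᵏ)ᵢⱼ (t + t⁻¹) ≥ 2 (Ãᵏ)ᵢⱼ` with `t = √dⱼ / √dᵢ`; pairing with the
nonnegative class indicators gives the inequality.
-/

open Matrix

namespace Matrix

variable {ι : Type*} [Fintype ι]

lemma semiconjBy_diagonal_sqrt [DecidableEq ι] (A : Matrix ι ι ℝ) {d : ι → ℝ} (hd : ∀ i, 0 < d i) :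
    SemiconjBy (diagonal fun i => √(d i)) (diagonal (fun i => (d i)⁻¹) * A)
      (diagonal (fun i => (√(d i))⁻¹) * A * diagonal fun i => (√(d i))⁻¹) := by
  have hleft : (fun i => √(d i) * (d i)⁻¹) = fun i => (√(d i))⁻¹ := by
    funext i
    have hs : √(d i) ≠ 0 := (Real.sqrt_pos.2 (hd i)).ne'
    calc √(d i) * (d i)⁻¹ = √(d i) * (√(d i) * √(d i))⁻¹ := by rw [Real.mul_self_sqrt (hd i).le]
      _ = (√(d i))⁻¹ := by field_simp
  have hright : (fun i => (√(d i))⁻¹ * √(d i)) = fun _ => 1 :=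
    funext fun i => inv_mul_cancel₀ (Real.sqrt_pos.2 (hd i)).ne'
  rw [SemiconjBy, ← mul_assoc, diagonal_mul_diagonal, hleft, mul_assoc _ (diagonal _),
    diagonal_mul_diagonal, hright, diagonal_one, mul_one]

lemma IsSymm.diagonal_mul_mul_diagonal {α : Type*} [CommSemiring α] [DecidableEq ι]
    {A : Matrix ι ι α} (hA : A.IsSymm) (s : ι → α) :
    (diagonal s * A * diagonal s).IsSymm :=
  IsSymm.ext fun i j => by simp only [mul_diagonal, diagonal_mul, hA.apply]; ring

lemma two_mul_apply_le_add_apply_of_semiconjBy [DecidableEq ι] {P M : Matrix ι ι ℝ} {s : ι → ℝ}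
    (hs : ∀ i, 0 < s i) (hPM : SemiconjBy (diagonal s) P M) (hM : M.IsSymm)
    (hMnn : ∀ i j, 0 ≤ M i j) (i j : ι) : 2 * M i j ≤ P i j + P j i := by
  have entry : ∀ a b, s a * P a b = M a b * s b := fun a b => by
    simpa only [diagonal_mul, mul_diagonal] using congrFun (congrFun hPM a) b
  have hij := entry i j
  have hji : s j * P j i = M i j * s i := by rw [entry, hM.apply]
  have hsum : (P i j + P j i) * (s i * s j) = M i j * (s i ^ 2 + s j ^ 2) := by
    linear_combination s j * hij + s i * hji
  rw [← mul_le_mul_iff_of_pos_right (mul_pos (hs i) (hs j)), hsum]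
  nlinarith [mul_nonneg (hMnn i j) (sq_nonneg (s i - s j))]

lemma diagonal_mul_mul_diagonal_apply_nonneg [DecidableEq ι] {A : Matrix ι ι ℝ}
    (hA : ∀ i j, 0 ≤ A i j) {s : ι → ℝ} (hs : 0 ≤ s) (i j : ι) :
    0 ≤ (diagonal s * A * diagonal s) i j := by
  rw [mul_diagonal, diagonal_mul]
  exact mul_nonneg (mul_nonneg (hs i) (hA i j)) (hs j)

lemma dotProduct_mulVec_nonneg_of_nonneg {α : Type*} [Semiring α] [PartialOrder α]
    [IsOrderedRing α] {N : Matrix ι ι α} (hN : ∀ i j, 0 ≤ N i j) {u v : ι → α} (hu : 0 ≤ u) (hv : 0 ≤ v) : 0 ≤ u ⬝ᵥ N *ᵥ v :=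
  dotProduct_nonneg_of_nonneg hu fun i => dotProduct_nonneg_of_nonneg (hN i) hv

lemma two_mul_dotProduct_mulVec_le {M P : Matrix ι ι ℝ} (h : ∀ i j, 2 * M i j ≤ P i j + P j i)
    {u v : ι → ℝ} (hu : 0 ≤ u) (hv : 0 ≤ v) :
    2 * (u ⬝ᵥ M *ᵥ v) ≤ u ⬝ᵥ P *ᵥ v + v ⬝ᵥ P *ᵥ u := by
  have hgap : 0 ≤ u ⬝ᵥ (P + Pᵀ - (2 : ℝ) • M) *ᵥ v :=
    dotProduct_mulVec_nonneg_of_nonneg (fun i j => by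
      simp only [sub_apply, add_apply, transpose_apply, smul_apply, smul_eq_mul]
      linarith [h i j]) hu hv
  have hswap : u ⬝ᵥ Pᵀ *ᵥ v = v ⬝ᵥ P *ᵥ u := by
    rw [mulVec_transpose, dotProduct_comm, dotProduct_mulVec]
  rw [sub_mulVec, add_mulVec, smul_mulVec, dotProduct_sub, dotProduct_add, dotProduct_smul,
    hswap, smul_eq_mul] at hgap
  linarith

lemma dotProduct_self_nonneg_real (u : ι → ℝ) : 0 ≤ u ⬝ᵥ u := by
  simpa using dotProduct_star_self_nonneg u

lemma dotProduct_self_mul_div_dotProduct_self (M : Matrix ι ι ℝ) (u v : ι → ℝ) :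
    (u ⬝ᵥ u) * (u ⬝ᵥ M *ᵥ v / (u ⬝ᵥ u)) = u ⬝ᵥ M *ᵥ v :=
  mul_div_cancel_of_imp' fun h => by rw [dotProduct_self_eq_zero.1 h, zero_dotProduct]

lemma sqrt_dotProduct_self_mul_mul_div (M : Matrix ι ι ℝ) (u v : ι → ℝ) :
    √((u ⬝ᵥ u) * (v ⬝ᵥ v)) * (u ⬝ᵥ M *ᵥ v / √((u ⬝ᵥ u) * (v ⬝ᵥ v))) = u ⬝ᵥ M *ᵥ v := by
  refine mul_div_cancel_of_imp' fun h => ?_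
  rw [Real.sqrt_eq_zero (mul_nonneg (dotProduct_self_nonneg_real u)
    (dotProduct_self_nonneg_real v)), mul_eq_zero, dotProduct_self_eq_zero,
    dotProduct_self_eq_zero] at h
  rcases h with rfl | rfl
  · exact zero_dotProduct _
  · rw [mulVec_zero, dotProduct_zero]

end Matrix

theorem interaction_probability_inequality_general {n K : ℕ}
    (A : Matrix (Fin n) (Fin n) ℝ) (hsym : A.IsSymm) (hnn : ∀ i j, 0 ≤ A i j)
    (d : Fin n → ℝ) (hdpos : ∀ i, 0 < d i)
    (P At : Matrix (Fin n) (Fin n) ℝ)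
    (hP : P = Matrix.diagonal (fun i => (d i)⁻¹) * A)
    (hAt : At = Matrix.diagonal (fun i => (Real.sqrt (d i))⁻¹) * A *
      Matrix.diagonal (fun i => (Real.sqrt (d i))⁻¹))
    (c : Fin n → Fin K)
    (y : Fin K → Fin n → ℝ) (hy : ∀ l i, y l i = if c i = l then 1 else 0)
    (R : Fin K → ℝ) (hR : ∀ l, R l = ∑ i, y l i * y l i)
    (k : ℕ)
    (Pi Pit : Fin K → Fin K → ℝ)
    (hPi : ∀ l m, Pi l m = (y l ⬝ᵥ (P ^ k).mulVec (y m)) / R l)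
    (hPit : ∀ l m, Pit l m = (y l ⬝ᵥ (At ^ k).mulVec (y m)) / Real.sqrt (R l * R m)) :
    (∀ l m, R l * Pi l m + R m * Pi m l ≥ 2 * Real.sqrt (R l * R m) * Pit l m) ∧
    (∀ l, Pi l l ≥ Pit l l) := by
  have hy_nonneg : ∀ l, 0 ≤ y l := fun l i => by rw [hy]; split_ifs <;> norm_num
  have hR_eq : ∀ l, R l = y l ⬝ᵥ y l := hR
  have hpow : SemiconjBy (diagonal fun i => √(d i)) (P ^ k) (At ^ k) := by
    rw [hP, hAt]; exact (semiconjBy_diagonal_sqrt A hdpos).pow_right k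
  have hAt_nonneg : ∀ i j, 0 ≤ At i j :=
    hAt ▸ diagonal_mul_mul_diagonal_apply_nonneg hnn fun i => inv_nonneg.2 (Real.sqrt_nonneg _)
  have hAt_symm : (At ^ k).IsSymm := (hAt ▸ hsym.diagonal_mul_mul_diagonal _).pow k
  have hentry : ∀ i j, 2 * (At ^ k) i j ≤ (P ^ k) i j + (P ^ k) j i :=
    two_mul_apply_le_add_apply_of_semiconjBy (fun i => Real.sqrt_pos.2 (hdpos i)) hpow hAt_symm
      (pow_apply_nonneg hAt_nonneg k)
  have hpair : ∀ l m, 2 * (y l ⬝ᵥ (At ^ k) *ᵥ y m) ≤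
      y l ⬝ᵥ (P ^ k) *ᵥ y m + y m ⬝ᵥ (P ^ k) *ᵥ y l := fun l m =>
    two_mul_dotProduct_mulVec_le hentry (hy_nonneg l) (hy_nonneg m)
  have hRPi : ∀ l m, R l * Pi l m = y l ⬝ᵥ (P ^ k) *ᵥ y m := fun l m => by
    rw [hPi, hR_eq]; exact dotProduct_self_mul_div_dotProduct_self _ _ _
  have hRPit : ∀ l m, √(R l * R m) * Pit l m = y l ⬝ᵥ (At ^ k) *ᵥ y m := fun l m => by
    rw [hPit, hR_eq, hR_eq]; exact sqrt_dotProduct_self_mul_mul_div _ _ _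
  refine ⟨fun l m => ?_, fun l => ?_⟩
  · rw [ge_iff_le, mul_assoc, hRPit, hRPi, hRPi]
    exact hpair l m
  · rw [ge_iff_le, hPi, hPit, hR_eq, Real.sqrt_mul_self (dotProduct_self_nonneg_real _)]
    exact div_le_div_of_nonneg_right (by linarith [hpair l l]) (dotProduct_self_nonneg_real _)

theorem interaction_probability_inequality {n K : ℕ}
    (A : Matrix (Fin n) (Fin n) ℝ) (hsym : A.IsSymm) (hnn : ∀ i j, 0 ≤ A i j)
    (d : Fin n → ℝ) (hd : ∀ i, d i = ∑ j, A i j) (hdpos : ∀ i, 0 < d i)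
    (P At : Matrix (Fin n) (Fin n) ℝ)
    (hP : P = Matrix.diagonal (fun i => (d i)⁻¹) * A)
    (hAt : At = Matrix.diagonal (fun i => (Real.sqrt (d i))⁻¹) * A *
      Matrix.diagonal (fun i => (Real.sqrt (d i))⁻¹))
    (c : Fin n → Fin K) (hc : Function.Surjective c)
    (y : Fin K → Fin n → ℝ) (hy : ∀ l i, y l i = if c i = l then 1 else 0)
    (R : Fin K → ℝ) (hR : ∀ l, R l = ∑ i, y l i * y l i)
    (k : ℕ) (hk : 0 < k)
    (Pi Pit : Fin K → Fin K → ℝ)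
    (hPi : ∀ l m, Pi l m = (y l ⬝ᵥ (P ^ k).mulVec (y m)) / R l)
    (hPit : ∀ l m, Pit l m = (y l ⬝ᵥ (At ^ k).mulVec (y m)) / Real.sqrt (R l * R m)) :
    (∀ l m, R l * Pi l m + R m * Pi m l ≥ 2 * Real.sqrt (R l * R m) * Pit l m) ∧
    (∀ l, Pi l l ≥ Pit l l) :=
  interaction_probability_inequality_general A hsym hnn d hdpos P At hP hAt c y hy R hR k Pi Pit hPi
    hPit
end
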